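/- Every invertible bounded linear operator B on E with ‖A − B‖ < 1/4 fails to be hyperbolic: its spectrum contains the point 1, which lies on the unit circle. -/

import Mathlib

noncomputable section

open Metric

/-- The closed disk of radius 1/2 centered at 1 in ℂ. -/
def K : Set ℂ := Metric.closedBall 1 (1/2)

instance : CompactSpace K :=
  isCompact_iff_compactSpace.mp (isCompact_closedBall 1 (1/2))

open scoped Classical in
/-- Extension of a continuous function on K to ℂ by 0. -/
def extendFn (f : C(K, ℂ)) : ℂ → ℂ := fun z => if h : z ∈ K then f ⟨z, h⟩ else 0

/-- The subspace of C(K, ℂ) of functions holomorphic on the interior of K. -/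
def Esub : Submodule ℂ C(K, ℂ) where
  carrier := {f | DifferentiableOn ℂ (extendFn f) (interior K)}
  add_mem' := by
    intro f g hf hg
    have h : extendFn (f + g) = extendFn f + extendFn g := by
      funext z; by_cases h : z ∈ K <;> simp [extendFn, h]
    simpa [Set.mem_setOf_eq, h] using hf.add hg
  zero_mem' := by
    have h : extendFn (0 : C(K, ℂ)) = fun _ => 0 := by
      funext z; by_cases h : z ∈ K <;> simp [extendFn, h]
    simpa [Set.mem_setOf_eq, h] using differentiableOn_const (0 : ℂ)
  smul_mem' := by
    intro c f hf
    have h : extendFn (c • f) = c • extendFn f := by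
      funext z; by_cases h : z ∈ K <;> simp [extendFn, h]
    simpa [Set.mem_setOf_eq, h] using hf.const_smul c

/-- The Banach space E. -/
abbrev E : Type := ↥Esub

/-- The constant function 1 as an element of E. -/
def oneE : E :=
  ⟨1, by
    have h : ∀ z ∈ interior K, extendFn (1 : C(K, ℂ)) z = 1 := by
      intro z hz; simp [extendFn, interior_subset hz]
    exact (differentiableOn_const (1 : ℂ)).congr h⟩

/-- An invertible bounded operator is hyperbolic if its spectrum is disjoint
from the unit circle. -/
def Hyperbolic (T : E →L[ℂ] E) : Prop :=
  Disjoint (spectrum ℂ T) {z : ℂ | ‖z‖ = 1}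

/-! `1 - A` is multiplication by `1 - z`. Since `|1 - z| = 1/2` on the boundary circle of `K`,
the maximum modulus principle gives `‖f‖ ≤ 2 ‖(1 - z) f‖`, and every `(1 - z) f` vanishes
at the centre `1`, so it lies at distance at least `1` from the constant function `1`. An
operator `1 - B` within `1/4` of `1 - A` therefore still misses the constant `1`, hence is not
invertible. -/

open scoped NNReal

namespace ContinuousLinearMap

variable {𝕜 X Y : Type*} [NontriviallyNormedField 𝕜] [SeminormedAddCommGroup X]
  [NormedSpace 𝕜 X] [SeminormedAddCommGroup Y] [NormedSpace 𝕜 Y]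

theorem notMem_range_of_norm_sub_lt {S : X →L[𝕜] Y} {c : ℝ≥0} (hS : AntilipschitzWith c S)
    {e : Y} (he : 0 < ‖e‖) (he_dist : ∀ x, ‖e‖ ≤ ‖e - S x‖) (T : X →L[𝕜] Y)
    (hST : 2 * c * ‖S - T‖ < 1) : e ∉ Set.range T := by
  rintro ⟨x, rfl⟩
  set d := ‖T x - S x‖
  have hd_pos : 0 < d := he.trans_le (he_dist x)
  have hSx : ‖S x‖ ≤ 2 * d := by
    calc ‖S x‖ ≤ ‖T x‖ + d := by simpa using norm_sub_le (T x) (T x - S x)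
      _ ≤ 2 * d := by linarith [he_dist x]
  have : d < d := calc
    d = ‖(S - T) x‖ := by rw [sub_apply, norm_sub_rev]
    _ ≤ ‖S - T‖ * ‖x‖ := le_opNorm _ _
    _ ≤ ‖S - T‖ * (c * (2 * d)) := by
      gcongr; exact (S.bound_of_antilipschitz hS x).trans (by gcongr)
    _ = 2 * c * ‖S - T‖ * d := by ring
    _ < d := by nlinarith
  exact lt_irrefl d this

end ContinuousLinearMap

def oneK : K := ⟨1, mem_closedBall_self (by norm_num)⟩

instance : Nonempty K := ⟨oneK⟩

theorem extendFn_coe (f : C(K, ℂ)) (z : K) : extendFn f z = f z := by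
  simp [extendFn, z.2]

theorem continuousOn_extendFn (f : C(K, ℂ)) : ContinuousOn (extendFn f) K := by
  rw [continuousOn_iff_continuous_domRestrict]
  convert f.continuous using 1
  funext z
  exact extendFn_coe f z

theorem interior_K : interior K = ball 1 (1 / 2) :=
  interior_closedBall 1 (by norm_num)

theorem closure_ball_eq_K : closure (ball (1 : ℂ) (1 / 2)) = K :=
  closure_ball 1 (by norm_num)

theorem diffContOnCl_extendFn (f : E) : DiffContOnCl ℂ (extendFn f) (ball 1 (1 / 2)) := by
  refine ⟨?_, ?_⟩
  · rw [← interior_K]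
    exact f.2
  · rw [closure_ball_eq_K]
    exact continuousOn_extendFn f

theorem norm_le_of_forall_mem_sphere {f : E} {C : ℝ}
    (hC : ∀ z : K, (z : ℂ) ∈ sphere 1 (1 / 2) → ‖(f : C(K, ℂ)) z‖ ≤ C) :
    ‖f‖ ≤ C := by
  refine (ContinuousMap.norm_le_of_nonempty _).mpr fun w => ?_
  rw [← extendFn_coe]
  refine Complex.norm_le_of_forall_mem_frontier_norm_le isBounded_ball
    (diffContOnCl_extendFn f) (fun z hz => ?_) (closure_ball_eq_K.symm ▸ w.2)
  rw [frontier_ball 1 (by norm_num : (1 / 2 : ℝ) ≠ 0)] at hz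
  have hzK : z ∈ K := sphere_subset_closedBall hz
  rw [extendFn_coe f ⟨z, hzK⟩]
  exact hC ⟨z, hzK⟩ hz

theorem norm_le_two_mul_norm_of_apply_eq {f g : E}
    (hg : ∀ z : K, (g : C(K, ℂ)) z = (1 - z) * (f : C(K, ℂ)) z) : ‖f‖ ≤ 2 * ‖g‖ :=
  norm_le_of_forall_mem_sphere fun z hz => by
    have := ContinuousMap.norm_coe_le_norm (g : C(K, ℂ)) z
    rw [hg, norm_mul, norm_sub_rev, ← dist_eq_norm, mem_sphere.mp hz] at this
    change _ ≤ 2 * ‖(g : C(K, ℂ))‖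
    linarith

theorem norm_oneE : ‖oneE‖ = 1 :=
  norm_one (α := C(K, ℂ))

theorem norm_oneE_le_norm_oneE_sub {g : E} (hg : (g : C(K, ℂ)) oneK = 0) :
    ‖oneE‖ ≤ ‖oneE - g‖ := by
  have h_eval : ((oneE - g : E) : C(K, ℂ)) oneK = 1 := by
    rw [Submodule.coe_sub, ContinuousMap.sub_apply, hg, sub_zero]
    rfl
  calc ‖oneE‖ = ‖((oneE - g : E) : C(K, ℂ)) oneK‖ := by rw [h_eval, norm_one, norm_oneE]
    _ ≤ ‖oneE - g‖ := ContinuousMap.norm_coe_le_norm _ _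

theorem close_operators_not_hyperbolic_general (A : E →L[ℂ] E)
    (hA : ∀ (f : E) (z : K), ((A f : C(K, ℂ)) z) = (z : ℂ) * ((f : C(K, ℂ)) z))
    (B : E →L[ℂ] E) (hB : ‖A - B‖ < 1/4) :
    (1 : ℂ) ∈ spectrum ℂ B ∧ ‖(1 : ℂ)‖ = 1 ∧ ¬ Hyperbolic B := by
  have hS (f : E) (z : K) :
      (((1 - A : E →L[ℂ] E) f : E) : C(K, ℂ)) z = (1 - z) * (f : C(K, ℂ)) z := by
    rw [sub_apply, one_apply_eq_self, Submodule.coe_sub,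
      ContinuousMap.sub_apply, hA, sub_mul, one_mul]
  have hS_anti : AntilipschitzWith 2 (1 - A : E →L[ℂ] E) :=
    (1 - A : E →L[ℂ] E).antilipschitz_of_bound fun f => by
      exact_mod_cast norm_le_two_mul_norm_of_apply_eq (hS f)
  have h_range : oneE ∉ Set.range (1 - B : E →L[ℂ] E) :=
    ContinuousLinearMap.notMem_range_of_norm_sub_lt hS_anti (norm_oneE ▸ one_pos)
      (fun f => norm_oneE_le_norm_oneE_sub (by rw [hS]; exact mul_eq_zero_of_left (sub_self 1) _))
      (1 - B)
      (by rw [sub_sub_sub_cancel_left, norm_sub_rev]; push_cast; linarith)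
  have hmem : (1 : ℂ) ∈ spectrum ℂ B := by
    rw [spectrum.mem_iff, map_one]
    exact fun h => h_range <|
      ((Module.End.isUnit_iff _).mp (h.map ContinuousLinearMap.toLinearMapRingHom)).surjective oneE
  exact ⟨hmem, norm_one, fun h => Set.disjoint_left.mp h hmem norm_one⟩

/-- Every invertible bounded operator B with ‖A − B‖ < 1/4 fails to be hyperbolic:
its spectrum contains 1, which lies on the unit circle. -/
theorem close_operators_not_hyperbolic (A : E →L[ℂ] E)
    (hA : ∀ (f : E) (z : K), ((A f : C(K, ℂ)) z) = (z : ℂ) * ((f : C(K, ℂ)) z))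
    (B : E →L[ℂ] E) (hBu : IsUnit B) (hB : ‖A - B‖ < 1/4) :
    (1 : ℂ) ∈ spectrum ℂ B ∧ ‖(1 : ℂ)‖ = 1 ∧ ¬ Hyperbolic B :=
  close_operators_not_hyperbolic_general A hA B hB
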